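/- (Deterministic form of the AVLPR guarantee with infrequent policy updates.) Let MG be an m-player finite Markov game, T ∈ ℕ, and let I: [T] → {0,1,…,T−1} satisfy I_t ≤ t−1 for all t. Suppose given Markov joint policies π^1,…,π^T with π^t = π^{I_t+1} for all t ∈ [T], functions \bar V^{u}_{i,h}: S → ℝ (with \bar V^{u}_{i,H+1} ≡ 0) and bonus functions g^{u}_{i,h}: S → [0,∞) for the relevant indices u, such that: (a) for every t ∈ [T], writing u = I_t, for all i ∈ [m], h ∈ [H], s ∈ S: max_{μ_i ∈ Δ(A_i)} (D_{μ_i×π^{u+1}_{-i,h}} − D_{π^{u+1}_h})[ r_{i,h} + P_h \bar V^{u+1}_{i,h+1} ](s) ≤ g^{u}_{i,h}(s), and min{ D_{π^{u+1}_h}[ r_{i,h} + P_h \bar V^{u+1}_{i,h+1} ](s) + g^{u}_{i,h}(s), H−h+1 } ≤ \bar V^{u+1}_{i,h}(s) ≤ D_{π^{u+1}_h}[ r_{i,h} + P_h \bar V^{u+1}_{i,h+1} ](s) + 2 g^{u}_{i,h}(s); (b) for every t ∈ [T], i ∈ [m], h ∈ [H], s ∈ S: g^{I_t}_{i,h}(s)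 ≤ 8 g^{t−1}_{i,h}(s); (c) for some B ≥ 0 and all i ∈ [m], h ∈ [H]: Σ_{t=1}^{T} E_{s_h ∼ π^t}[ g^{t−1}_{i,h}(s_h) ] ≤ B. Then CCEReg(T) := max_{i∈[m]} Σ_{t=1}^T [ V^{†,π^t_{-i}}_{i,1}(s_1) − V^{π^t}_{i,1}(s_1) ]_+ ≤ 16 H B. -/

import Mathlib

open Finset

/-- A probability vector on a finite type. -/
def IsDist {α : Type*} [Fintype α] (p : α → ℝ) : Prop :=
  (∀ a, 0 ≤ p a) ∧ ∑ a, p a = 1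

/-- Combine player `i`'s action with a profile of actions of the other players into a
joint action. -/
def combine {m : ℕ} {A : Fin m → Type*} (i : Fin m) (ai : A i)
    (an : ∀ j : {j : Fin m // j ≠ i}, A j.1) (j : Fin m) : A j :=
  if h : j = i then cast (congrArg A h).symm ai else an ⟨j, h⟩

/-- Restrict a joint action to the players other than `i`. -/
def restrict {m : ℕ} {A : Fin m → Type*} (i : Fin m) (a : ∀ j, A j)
    (j : {j : Fin m // j ≠ i}) : A j.1 :=
  a j.1

/-- Marginal, on the actions of all players other than `i`, of a distribution `p` over
joint actions. -/
noncomputable def marg {m : ℕ} {A : Fin m → Type*} [∀ j, Fintype (A j)] (i : Fin m)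
    (p : (∀ j, A j) → ℝ) (an : ∀ j : {j : Fin m // j ≠ i}, A j.1) : ℝ :=
  ∑ ai : A i, p (combine i ai an)

/-- The value function `V^π_h(s)` of a Markov joint policy `π` (zero-based steps,
`jointV H P rew π H s = 0`). -/
noncomputable def jointV {S : Type*} [Fintype S] {m : ℕ} {A : Fin m → Type*}
    [∀ j, Fintype (A j)] (H : ℕ) (P : ℕ → S → (∀ j, A j) → S → ℝ)
    (rew : ℕ → S → (∀ j, A j) → ℝ) (π : ℕ → S → (∀ j, A j) → ℝ) : ℕ → S → ℝ
  | h, s =>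
    if _hh : h < H then
      ∑ a, π h s a * (rew h s a + ∑ s', P h s a s' * jointV H P rew π (h + 1) s')
    else 0
  termination_by h _ => H - h
  decreasing_by omega

/-- The distribution of the state `s_h` at step `h` when running the Markov joint
policy `π` from the initial state `s1` (zero-based steps). -/
noncomputable def stateDist {S : Type*} [Fintype S] [DecidableEq S] {m : ℕ}
    {A : Fin m → Type*} [∀ j, Fintype (A j)]
    (P : ℕ → S → (∀ j, A j) → S → ℝ) (π : ℕ → S → (∀ j, A j) → ℝ) (s1 : S) :
    ℕ → S → ℝ
  | 0, s => if s = s1 then 1 else 0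
  | (h + 1), s' => ∑ s, ∑ a, stateDist P π s1 h s * π h s a * P h s a s'

/-!
Fix a player `i` and a round `t`, and let `u = I t`, so that `π^t = π^u`. The sandwich
condition (a) makes `V̄^u_i` optimistic: backward induction, using the no-regret inequality
against the deviation `π^†_i × π^u_{-i}` and the cap `H - h` satisfied by every value function,
shows that `V̄^u_i` dominates the deviation's value. Its upper half
`V̄^u_i ≤ D_{π^u}[r + P V̄^u_i] + 2 g^u` telescopes along the state distribution of `π^u`
(performance difference), so the round's regret is at most
`Σ_h E_{π^t}[2 g^u_h] ≤ 16 Σ_h E_{π^t}[g^t_h]` by (b). Summing over the rounds and using (c)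
gives `16 H B`.
-/

lemma IsDist.sum_mul_le {α : Type*} [Fintype α] {p f : α → ℝ} {c : ℝ} (hp : IsDist p)
    (hf : ∀ a, f a ≤ c) : ∑ a, p a * f a ≤ c :=
  calc ∑ a, p a * f a ≤ ∑ a, p a * c := by gcongr with a _; exacts [hp.1 a, hf a]
    _ = c := by rw [← sum_mul, hp.2, one_mul]

lemma sum_range_le_of_le_sum_range {T H : ℕ} {x : ℕ → ℝ} {Y : ℕ → ℕ → ℝ} {c B : ℝ}
    (hc : 0 ≤ c) (hx : ∀ t < T, x t ≤ c * ∑ h ∈ range H, Y t h)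
    (hY : ∀ h < H, ∑ t ∈ range T, Y t h ≤ B) : ∑ t ∈ range T, x t ≤ c * H * B :=
  calc ∑ t ∈ range T, x t ≤ ∑ t ∈ range T, c * ∑ h ∈ range H, Y t h :=
        sum_le_sum fun t ht => hx t (mem_range.1 ht)
    _ = c * ∑ h ∈ range H, ∑ t ∈ range T, Y t h := by rw [← mul_sum, sum_comm]
    _ ≤ c * ∑ h ∈ range H, B := by
        gcongr with h hh
        exact hY h (mem_range.1 hh)
    _ = c * H * B := by rw [sum_const, card_range, nsmul_eq_mul, mul_assoc]

section Marginal

variable {m : ℕ} {A : Fin m → Type*}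

lemma combine_eq_piSplitAt_symm (i : Fin m) (ai : A i)
    (an : ∀ j : {j : Fin m // j ≠ i}, A j.1) :
    combine i ai an = (Equiv.piSplitAt i A).symm (ai, an) := by
  funext j
  by_cases h : j = i
  · subst h; simp [combine]
  · simp [combine, h]

variable [∀ j, Fintype (A j)]

lemma sum_marg (i : Fin m) (p : (∀ j, A j) → ℝ) : ∑ an, marg i p an = ∑ a, p a := by
  simp only [marg, combine_eq_piSplitAt_symm]
  rw [sum_comm, ← Fintype.sum_prod_type', Equiv.sum_comp (Equiv.piSplitAt i A).symm]

lemma IsDist.mul_marg {i : Fin m} {μ : A i → ℝ} {p : (∀ j, A j) → ℝ} (hμ : IsDist μ)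
    (hp : IsDist p) : IsDist fun a => μ (a i) * marg i p (restrict i a) := by
  refine ⟨fun a => mul_nonneg (hμ.1 _) (sum_nonneg fun _ _ => hp.1 _), ?_⟩
  calc ∑ a, μ (a i) * marg i p (restrict i a)
      = ∑ x : A i × _, μ x.1 * marg i p x.2 :=
        (Equiv.piSplitAt i A).sum_comp fun x => μ x.1 * marg i p x.2
    _ = (∑ ai, μ ai) * ∑ an, marg i p an := by
        rw [Fintype.sum_mul_sum]; exact Fintype.sum_prod_type' fun ai an => μ ai * marg i p an
    _ = 1 := by rw [sum_marg, hμ.2, hp.2, one_mul]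

end Marginal

section Bellman

variable {S α : Type*} [Fintype S] [Fintype α]

/-- `D_π[r_h + P_h V](s)`. -/
noncomputable def bellmanBackup (P : ℕ → S → α → S → ℝ) (rew : ℕ → S → α → ℝ)
    (π : ℕ → S → α → ℝ) (h : ℕ) (V : S → ℝ) (s : S) : ℝ :=
  ∑ a, π h s a * (rew h s a + ∑ s', P h s a s' * V s')

variable {P : ℕ → S → α → S → ℝ} {rew : ℕ → S → α → ℝ} {π : ℕ → S → α → ℝ} {h : ℕ} {s : S}

lemma bellmanBackup_mono {V W : S → ℝ} (hπ : ∀ a, 0 ≤ π h s a) (hP : ∀ a s', 0 ≤ P h s a s')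
    (hVW : ∀ s', V s' ≤ W s') : bellmanBackup P rew π h V s ≤ bellmanBackup P rew π h W s := by
  unfold bellmanBackup
  gcongr with a _ s' _
  exacts [hπ a, hP a s', hVW s']

lemma bellmanBackup_le {V : S → ℝ} {c : ℝ} (hπ : IsDist (π h s)) (hP : ∀ a, IsDist (P h s a))
    (hrew : ∀ a, rew h s a ≤ 1) (hV : ∀ s', V s' ≤ c) : bellmanBackup P rew π h V s ≤ 1 + c :=
  hπ.sum_mul_le fun a => add_le_add (hrew a) ((hP a).sum_mul_le hV)

lemma bellmanBackup_sub_bellmanBackup (V W : S → ℝ) :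
    bellmanBackup P rew π h V s - bellmanBackup P rew π h W s
      = ∑ a, π h s a * ∑ s', P h s a s' * (V s' - W s') := by
  unfold bellmanBackup
  rw [← sum_sub_distrib]
  refine sum_congr rfl fun a _ => ?_
  simp only [mul_sub, sum_sub_distrib]
  ring

end Bellman

section MarkovGame

variable {S : Type*} [Fintype S] {m H : ℕ} {A : Fin m → Type*} [∀ j, Fintype (A j)]
  {P : ℕ → S → (∀ j, A j) → S → ℝ} {rew : ℕ → S → (∀ j, A j) → ℝ}
  {π σ : ℕ → S → (∀ j, A j) → ℝ}

lemma jointV_of_lt {h : ℕ} (hh : h < H) (s : S) :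
    jointV H P rew π h s = bellmanBackup P rew π h (jointV H P rew π (h + 1)) s := by
  rw [jointV, dif_pos hh, bellmanBackup]

lemma jointV_of_le {h : ℕ} (hh : H ≤ h) (s : S) : jointV H P rew π h s = 0 := by
  rw [jointV, dif_neg (not_lt.2 hh)]

lemma jointV_le_sub (hP : ∀ h < H, ∀ s a, IsDist (P h s a))
    (hrew : ∀ h < H, ∀ s a, rew h s a ≤ 1) (hπ : ∀ h < H, ∀ s, IsDist (π h s)) :
    ∀ h ≤ H, ∀ s, jointV H P rew π h s ≤ (H : ℝ) - h := by
  intro h hh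
  induction hh using Nat.decreasingInduction with
  | self => simp [jointV_of_le le_rfl]
  | of_succ k hk ih =>
    intro s
    rw [jointV_of_lt hk]
    have := bellmanBackup_le (hπ k hk s) (hP k hk s) (hrew k hk s) ih
    push_cast at this
    linarith

lemma jointV_le_of_min_bellmanBackup_le {W : ℕ → S → ℝ} (hP : ∀ h < H, ∀ s a, IsDist (P h s a))
    (hrew : ∀ h < H, ∀ s a, rew h s a ≤ 1) (hσ : ∀ h < H, ∀ s, IsDist (σ h s))
    (hWH : ∀ s, 0 ≤ W H s)
    (hW : ∀ h < H, ∀ s, min (bellmanBackup P rew σ h (W (h + 1)) s) ((H : ℝ) - h) ≤ W h s) :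
    ∀ h ≤ H, ∀ s, jointV H P rew σ h s ≤ W h s := by
  intro h hh
  induction hh using Nat.decreasingInduction with
  | self => simpa [jointV_of_le le_rfl] using hWH
  | of_succ k hk ih =>
    intro s
    refine le_trans (le_min ?_ (jointV_le_sub hP hrew hσ k hk.le s)) (hW k hk s)
    rw [jointV_of_lt hk]
    exact bellmanBackup_mono (hσ k hk s).1 (fun a => (hP k hk s a).1) ih

variable [DecidableEq S] {s1 : S}

lemma stateDist_nonneg (hP : ∀ h < H, ∀ s a s', 0 ≤ P h s a s')
    (hπ : ∀ h < H, ∀ s a, 0 ≤ π h s a) : ∀ h ≤ H, ∀ s, 0 ≤ stateDist P π s1 h s := by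
  intro h hh
  induction h with
  | zero => intro s; rw [stateDist]; positivity
  | succ k ih =>
    intro s'
    rw [stateDist]
    have hk : k < H := hh
    exact sum_nonneg fun s _ => sum_nonneg fun a _ =>
      mul_nonneg (mul_nonneg (ih hk.le s) (hπ k hk s a)) (hP k hk s a s')

lemma sum_stateDist_zero_mul (X : S → ℝ) : ∑ s, stateDist P π s1 0 s * X s = X s1 := by
  simp [stateDist]

lemma sum_stateDist_succ_mul (h : ℕ) (X : S → ℝ) :
    ∑ s', stateDist P π s1 (h + 1) s' * X s'
      = ∑ s, stateDist P π s1 h s * ∑ a, π h s a * ∑ s', P h s a s' * X s' := by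
  simp only [stateDist, sum_mul, mul_sum]
  rw [sum_comm]
  refine sum_congr rfl fun s _ => ?_
  rw [sum_comm]
  exact sum_congr rfl fun a _ => sum_congr rfl fun s' _ => by ring

/-- Performance difference lemma, telescoped along the state distribution of `π`. -/
lemma sub_jointV_le_sum_stateDist {W e : ℕ → S → ℝ} (hP : ∀ h < H, ∀ s a s', 0 ≤ P h s a s')
    (hπ : ∀ h < H, ∀ s a, 0 ≤ π h s a) (hWH : ∀ s, W H s ≤ 0)
    (hW : ∀ h < H, ∀ s, W h s ≤ bellmanBackup P rew π h (W (h + 1)) s + e h s) :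
    W 0 s1 - jointV H P rew π 0 s1 ≤ ∑ h ∈ range H, ∑ s, stateDist P π s1 h s * e h s := by
  set Δ : ℕ → ℝ := fun h => ∑ s, stateDist P π s1 h s * (W h s - jointV H P rew π h s)
  have hd := stateDist_nonneg (s1 := s1) hP hπ
  have hstep : ∀ h ∈ range H, Δ h - Δ (h + 1) ≤ ∑ s, stateDist P π s1 h s * e h s := by
    intro h hh
    have hh : h < H := mem_range.1 hh
    simp only [Δ, sum_stateDist_succ_mul, ← sum_sub_distrib, ← mul_sub]
    refine sum_le_sum fun s _ => mul_le_mul_of_nonneg_left ?_ (hd h hh.le s)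
    have hdiff := bellmanBackup_sub_bellmanBackup (P := P) (rew := rew) (π := π) (h := h) (s := s)
      (W (h + 1)) (jointV H P rew π (h + 1))
    linarith [hW h hh s, jointV_of_lt (P := P) (rew := rew) (π := π) hh s]
  have hΔH : Δ H ≤ 0 := sum_nonpos fun s _ => mul_nonpos_of_nonneg_of_nonpos (hd H le_rfl s)
    (by rw [jointV_of_le le_rfl, sub_zero]; exact hWH s)
  calc W 0 s1 - jointV H P rew π 0 s1 = Δ 0 :=
        (sum_stateDist_zero_mul fun s => W 0 s - jointV H P rew π 0 s).symm
    _ = ∑ h ∈ range H, (Δ h - Δ (h + 1)) + Δ H := by rw [sum_range_sub']; ring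
    _ ≤ ∑ h ∈ range H, ∑ s, stateDist P π s1 h s * e h s := by linarith [sum_le_sum hstep]

lemma jointV_sub_jointV_le_sum_stateDist {W g : ℕ → S → ℝ}
    (hP : ∀ h < H, ∀ s a, IsDist (P h s a)) (hrew : ∀ h < H, ∀ s a, rew h s a ≤ 1)
    (hπ : ∀ h < H, ∀ s, IsDist (π h s)) (hσ : ∀ h < H, ∀ s, IsDist (σ h s))
    (hWH : ∀ s, W H s = 0)
    (hdev : ∀ h < H, ∀ s,
      bellmanBackup P rew σ h (W (h + 1)) s ≤ bellmanBackup P rew π h (W (h + 1)) s + g h s)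
    (hlow : ∀ h < H, ∀ s,
      min (bellmanBackup P rew π h (W (h + 1)) s + g h s) ((H : ℝ) - h) ≤ W h s)
    (hup : ∀ h < H, ∀ s, W h s ≤ bellmanBackup P rew π h (W (h + 1)) s + 2 * g h s) :
    jointV H P rew σ 0 s1 - jointV H P rew π 0 s1
      ≤ ∑ h ∈ range H, ∑ s, stateDist P π s1 h s * (2 * g h s) := by
  have hoptimistic := jointV_le_of_min_bellmanBackup_le hP hrew hσ (fun s => (hWH s).ge)
    (fun h hh s => (min_le_min_right _ (hdev h hh s)).trans (hlow h hh s)) 0 H.zero_le s1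
  have hgap := sub_jointV_le_sum_stateDist (s1 := s1) (fun h hh s a => (hP h hh s a).1)
    (fun h hh s => (hπ h hh s).1) (fun s => (hWH s).le) hup
  linarith

end MarkovGame

/-- Rounds are zero-based: round `t` is round `t + 1` of the paper, `I t` is `I_{t+1}`, and
`πt u`, `Vbar u`, `g u` are `π^{u+1}`, `V̄^{u+1}`, `g^u`. -/
theorem statement_3 {S : Type*} [Fintype S] [DecidableEq S] {m H T : ℕ}
    {A : Fin m → Type*} [∀ j, Fintype (A j)]
    (P : ℕ → S → (∀ j, A j) → S → ℝ)
    (hP : ∀ h < H, ∀ s a, IsDist (P h s a))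
    (rew : Fin m → ℕ → S → (∀ j, A j) → ℝ)
    (hrew : ∀ i, ∀ h < H, ∀ s a, rew i h s a ∈ Set.Icc (0 : ℝ) 1)
    (s1 : S)
    (I : ℕ → ℕ) (hI : ∀ t < T, I t ≤ t)
    (πt : ℕ → ℕ → S → (∀ j, A j) → ℝ)
    (hπt : ∀ t < T, ∀ h < H, ∀ s, IsDist (πt t h s))
    (hstick : ∀ t < T, πt t = πt (I t))
    (Vbar : ℕ → Fin m → ℕ → S → ℝ)
    (hVbarH : ∀ u < T, ∀ i s, Vbar u i H s = 0)
    (g : ℕ → Fin m → ℕ → S → ℝ)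
    (hg : ∀ u < T, ∀ i, ∀ h < H, ∀ s, 0 ≤ g u i h s)
    (B : ℝ)
    -- (a) per-state no-regret and optimistic sandwich, at the replay rounds `u = I t`
    (ha : ∀ t < T, ∀ i : Fin m, ∀ h < H, ∀ s,
      (∀ μ : A i → ℝ, IsDist μ →
        (∑ a, μ (a i) * marg i (πt (I t) h s) (restrict i a) *
            (rew i h s a + ∑ s', P h s a s' * Vbar (I t) i (h + 1) s')) -
          (∑ a, πt (I t) h s a *
            (rew i h s a + ∑ s', P h s a s' * Vbar (I t) i (h + 1) s'))
          ≤ g (I t) i h s) ∧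
      min ((∑ a, πt (I t) h s a *
              (rew i h s a + ∑ s', P h s a s' * Vbar (I t) i (h + 1) s'))
            + g (I t) i h s) ((H : ℝ) - (h : ℝ))
        ≤ Vbar (I t) i h s ∧
      Vbar (I t) i h s
        ≤ (∑ a, πt (I t) h s a *
              (rew i h s a + ∑ s', P h s a s' * Vbar (I t) i (h + 1) s'))
            + 2 * g (I t) i h s)
    -- (b) validity of infrequent updates: the bonus at the replay round is at most
    -- eight times the current bonus
    (hb : ∀ t < T, ∀ i : Fin m, ∀ h < H, ∀ s, g (I t) i h s ≤ 8 * g t i h s)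
    -- (c) pigeonhole condition
    (hc : ∀ i : Fin m, ∀ h < H,
      ∑ t ∈ Finset.range T, ∑ s, stateDist P (πt t) s1 h s * g t i h s ≤ B) :
    ∀ i : Fin m, ∀ πdag : ℕ → ℕ → S → A i → ℝ,
      (∀ t < T, ∀ h < H, ∀ s, IsDist (πdag t h s)) →
      ∑ t ∈ Finset.range T,
          max (jointV H P (rew i)
                (fun h s a => πdag t h s (a i) * marg i (πt t h s) (restrict i a)) 0 s1
              - jointV H P (rew i) (πt t) 0 s1) 0
        ≤ 16 * H * B := by
  intro i πdag hπdag
  refine sum_range_le_of_le_sum_range (by norm_num) (fun t ht => ?_) (hc i)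
  have hu : I t < T := (hI t ht).trans_lt ht
  have hd := stateDist_nonneg (s1 := s1) (fun h hh s a => (hP h hh s a).1)
    (fun h hh s => (hπt t ht h hh s).1)
  have hgap := jointV_sub_jointV_le_sum_stateDist (s1 := s1) (W := Vbar (I t) i)
    (σ := fun h s a => πdag t h s (a i) * marg i (πt (I t) h s) (restrict i a))
    hP (fun h hh s a => (hrew i h hh s a).2) (hπt (I t) hu)
    (fun h hh s => (hπdag t ht h hh s).mul_marg (hπt (I t) hu h hh s)) (hVbarH (I t) hu i)
    (fun h hh s => sub_le_iff_le_add'.1 ((ha t ht i h hh s).1 (πdag t h s) (hπdag t ht h hh s)))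
    (fun h hh s => (ha t ht i h hh s).2.1) (fun h hh s => (ha t ht i h hh s).2.2)
  rw [← hstick t ht] at hgap
  refine max_le (hgap.trans ?_) ?_
  · simp only [mul_sum]
    refine sum_le_sum fun h hh => sum_le_sum fun s _ => ?_
    have hh : h < H := mem_range.1 hh
    linarith [mul_le_mul_of_nonneg_left (hb t ht i h hh s) (hd h hh.le s)]
  · refine mul_nonneg (by norm_num) (sum_nonneg fun h hh => sum_nonneg fun s _ => ?_)
    have hh : h < H := mem_range.1 hh
    exact mul_nonneg (hd h hh.le s) (hg t ht i h hh s)
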